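/- arXiv:nlin/0310035 — 4 statements merged into one kernel-verified Lean document; each statement's English description precedes it below -/
import Mathlib

section
/- Let M = M_{A,α} = (1+A, A/α; −αA, 1−A) with α ∈ ℚ, α ≠ 0, and let f be the corresponding torus map on [0,1)². For any orbit (x_n,y_n) of f, the quantity γ_n = y_n + αx_n satisfies γ_{n+1} − γ_n = −α s_n − t_n where s_n, t_n are the integer codings, and hence γ_n takes only finitely many values along each orbit. -/
/-- For the semi-rational parabolic torus map M_{A,α} with α rational,
γ_n = y_n + α x_n satisfies γ_{n+1} − γ_n = −α s_n − t_n and takes only finitely many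
values along each orbit. -/
theorem stmt_4 (A α : ℝ) (hα : ∃ q : ℚ, α = (q : ℝ)) (hα0 : α ≠ 0)
    (x₀ y₀ : ℝ) (hx : 0 ≤ x₀ ∧ x₀ < 1) (hy : 0 ≤ y₀ ∧ y₀ < 1)
    (f : ℝ × ℝ → ℝ × ℝ)
    (hf : ∀ p : ℝ × ℝ, f p = (Int.fract ((1 + A) * p.1 + (A / α) * p.2),
                              Int.fract (-α * A * p.1 + (1 - A) * p.2)))
    (p : ℕ → ℝ × ℝ) (hp0 : p 0 = (x₀, y₀)) (hp : ∀ n, p (n + 1) = f (p n)) :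
    let s : ℕ → ℤ := fun n => ⌊(1 + A) * (p n).1 + (A / α) * (p n).2⌋
    let t : ℕ → ℤ := fun n => ⌊-α * A * (p n).1 + (1 - A) * (p n).2⌋
    let γ : ℕ → ℝ := fun n => (p n).2 + α * (p n).1
    (∀ n, γ (n + 1) - γ n = -α * (s n : ℝ) - (t n : ℝ)) ∧
    (Set.range γ).Finite := by
  intro s t γ
  obtain ⟨q, rfl⟩ := hα
  -- Part 1
  have key : ∀ n, γ (n + 1) - γ n = -(q:ℝ) * (s n : ℝ) - (t n : ℝ) := by
    intro n
    have h1 := hp n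
    rw [hf] at h1
    have hx1 : (p (n+1)).1 = Int.fract ((1 + A) * (p n).1 + ((A:ℝ) / q) * (p n).2) := by
      rw [h1]
    have hy1 : (p (n+1)).2 = Int.fract (-(q:ℝ) * A * (p n).1 + (1 - A) * (p n).2) := by
      rw [h1]
    have hab : (-(q:ℝ) * A * (p n).1 + (1 - A) * (p n).2)
        + (q:ℝ) * ((1 + A) * (p n).1 + ((A:ℝ) / q) * (p n).2)
        = (p n).2 + (q:ℝ) * (p n).1 := by
      field_simp
      ring
    simp only [γ, s, t, hx1, hy1, Int.fract]
    linarith [hab]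
  refine ⟨key, ?_⟩
  -- bounds on components
  have hcomp : ∀ n, (0 ≤ (p n).1 ∧ (p n).1 < 1) ∧ (0 ≤ (p n).2 ∧ (p n).2 < 1) := by
    intro n
    cases n with
    | zero => rw [hp0]; exact ⟨hx, hy⟩
    | succ m =>
      rw [hp m, hf]
      exact ⟨⟨Int.fract_nonneg _, Int.fract_lt_one _⟩,
             ⟨Int.fract_nonneg _, Int.fract_lt_one _⟩⟩
  have hbound : ∀ n, |γ n| ≤ 1 + |(q:ℝ)| := by
    intro n
    obtain ⟨⟨h1, h2⟩, ⟨h3, h4⟩⟩ := hcomp n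
    have : |γ n| ≤ |(p n).2| + |(q:ℝ) * (p n).1| := abs_add_le _ _
    have h5 : |(p n).2| ≤ 1 := by rw [abs_of_nonneg h3]; linarith
    have h6 : |(q:ℝ) * (p n).1| ≤ |(q:ℝ)| := by
      rw [abs_mul]
      calc |(q:ℝ)| * |(p n).1| ≤ |(q:ℝ)| * 1 := by
            apply mul_le_mul_of_nonneg_left _ (abs_nonneg _)
            rw [abs_of_nonneg h1]; linarith
        _ = |(q:ℝ)| := mul_one _
    linarith
  set d : ℤ := (q.den : ℤ) with hdd
  have hd0 : (0:ℝ) < (d:ℝ) := by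
    simp [hdd]
    exact_mod_cast q.pos
  -- each γ n lies in γ 0 - ℤ/d
  have hmem : ∀ n, ∃ m : ℤ, γ n = γ 0 - (m : ℝ) / (d : ℝ) := by
    intro n
    induction n with
    | zero => exact ⟨0, by simp⟩
    | succ k ih =>
      obtain ⟨m, hm⟩ := ih
      refine ⟨m + (q.num * s k + d * t k), ?_⟩
      have hqd : (q:ℝ) = (q.num : ℝ) / (d : ℝ) := by
        rw [hdd]
        push_cast
        rw [Rat.cast_def]
      have := key k
      have hγ : γ (k+1) = γ k + (-(q:ℝ) * (s k : ℝ) - (t k : ℝ)) := by linarith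
      rw [hγ, hm, hqd]
      push_cast
      field_simp
      ring
  -- finiteness
  set K : ℤ := ⌈2 * (1 + |(q:ℝ)|) * (d:ℝ)⌉ with hK
  have hsub : Set.range γ ⊆ (fun m : ℤ => γ 0 - (m:ℝ) / (d:ℝ)) '' (Set.Icc (-K) K) := by
    rintro _ ⟨n, rfl⟩
    obtain ⟨m, hm⟩ := hmem n
    refine ⟨m, ?_, hm.symm⟩
    have h2 : |γ 0 - γ n| ≤ 2 * (1 + |(q:ℝ)|) := by
      have := hbound 0
      have := hbound n
      have := abs_sub (γ 0) (γ n)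
      linarith
    have h1 : (m:ℝ) = (γ 0 - γ n) * (d:ℝ) := by
      rw [hm]; field_simp; ring
    have h3 : |(m:ℝ)| ≤ 2 * (1 + |(q:ℝ)|) * (d:ℝ) := by
      rw [h1, abs_mul, abs_of_pos hd0]
      exact mul_le_mul_of_nonneg_right h2 hd0.le
    have h4 : |(m:ℝ)| ≤ (K:ℝ) := h3.trans (Int.le_ceil _)
    have h5 : |m| ≤ K := by exact_mod_cast (abs_le.mpr (abs_le.mp h4)).trans_eq rfl
    constructor
    · linarith [abs_le.mp h5 |>.1]
    · linarith [abs_le.mp h5 |>.2]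
  exact Set.Finite.subset (Set.Finite.image _ (Set.finite_Icc _ _)) hsub
end

section
/- Let a,b > 0, a+b > 1, λ₁ < 0 < 1 < λ₂ the eigenvalues of M = (a,b;1,0), and f(x,y) = (ax+by mod 1, x) with coding s_n = ⌊a x_n + b y_n⌋ along the orbit (x_n,y_n) = fⁿ(x_0,y_0). If a symbolic sequence (s_0 s_1 ⋯) is the itinerary of a point (x_0,y_0) ∈ [0,1)², then Σ_{j≥0} s_j / λ₂^j = b y_0 + λ₂ x_0. -/
/-- For the map f(x,y) = (ax+by mod 1, x) with a,b>0, a+b>1, and λ₂ > 1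
the positive eigenvalue, the itinerary of any point (x₀,y₀) ∈ [0,1)² satisfies
Σ_{j≥0} s_j/λ₂^j = b y₀ + λ₂ x₀. -/
theorem stmt_6 (a b lam₂ : ℝ) (ha : 0 < a) (hb : 0 < b) (hab : 1 < a + b)
    (heig : lam₂ ^ 2 = a * lam₂ + b) (hlam : 1 < lam₂)
    (x₀ y₀ : ℝ) (hx : 0 ≤ x₀ ∧ x₀ < 1) (hy : 0 ≤ y₀ ∧ y₀ < 1)
    (f : ℝ × ℝ → ℝ × ℝ)
    (hf : ∀ p : ℝ × ℝ, f p = (Int.fract (a * p.1 + b * p.2), p.1))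
    (p : ℕ → ℝ × ℝ) (hp0 : p 0 = (x₀, y₀)) (hp : ∀ n, p (n + 1) = f (p n)) :
    HasSum (fun j : ℕ => (⌊a * (p j).1 + b * (p j).2⌋ : ℝ) / lam₂ ^ j)
      (b * y₀ + lam₂ * x₀) := by
  obtain ⟨hx0, hx1⟩ := hx
  obtain ⟨hy0, hy1⟩ := hy
  have hlam0 : (0:ℝ) < lam₂ := lt_trans one_pos hlam
  set s : ℕ → ℝ := fun n => (⌊a * (p n).1 + b * (p n).2⌋ : ℝ) with hs
  have hbound : ∀ n, 0 ≤ (p n).1 ∧ (p n).1 < 1 ∧ 0 ≤ (p n).2 ∧ (p n).2 < 1 := by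
    intro n
    induction n with
    | zero => rw [hp0]; exact ⟨hx0, hx1, hy0, hy1⟩
    | succ n ih =>
      rw [hp n, hf]
      exact ⟨Int.fract_nonneg _, Int.fract_lt_one _, ih.1, ih.2.1⟩
  set u : ℕ → ℝ := fun n => b * (p n).2 + lam₂ * (p n).1 with hu
  have hrec : ∀ n, u (n+1) = lam₂ * (u n - s n) := by
    intro n
    have h1 : (p (n+1)).1 = a * (p n).1 + b * (p n).2 - s n := by
      rw [hp n, hf]; simp only [Int.fract, hs]
    have h2 : (p (n+1)).2 = (p n).1 := by rw [hp n, hf]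
    simp only [hu, h1, h2]
    linear_combination (-(p n).1) * heig
  have hsn : ∀ n, 0 ≤ s n := by
    intro n
    obtain ⟨h1, _, h2, _⟩ := hbound n
    have h : (0:ℝ) ≤ a * (p n).1 + b * (p n).2 :=
      add_nonneg (mul_nonneg ha.le h1) (mul_nonneg hb.le h2)
    simp only [hs]
    exact_mod_cast Int.floor_nonneg.mpr h
  have hterm : ∀ j, s j / lam₂ ^ j = u j / lam₂ ^ j - u (j+1) / lam₂ ^ (j+1) := by
    intro j
    rw [hrec j]
    have hne : lam₂ ^ j ≠ 0 := pow_ne_zero _ hlam0.ne'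
    field_simp
    ring
  have hnonneg : ∀ j, 0 ≤ s j / lam₂ ^ j := fun j =>
    div_nonneg (hsn j) (pow_nonneg hlam0.le j)
  have hu0 : u 0 = b * y₀ + lam₂ * x₀ := by simp [hu, hp0]
  have hsum : ∀ n, ∑ j ∈ Finset.range n, s j / lam₂ ^ j = u 0 - u n / lam₂ ^ n := by
    intro n
    calc ∑ j ∈ Finset.range n, s j / lam₂ ^ j
        = ∑ j ∈ Finset.range n, (u j / lam₂ ^ j - u (j+1) / lam₂ ^ (j+1)) := by
          exact Finset.sum_congr rfl fun j _ => hterm j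
      _ = u 0 / lam₂ ^ 0 - u n / lam₂ ^ n := Finset.sum_range_sub' (fun j => u j / lam₂ ^ j) n
      _ = u 0 - u n / lam₂ ^ n := by norm_num
  have htend : Filter.Tendsto (fun n => u n / lam₂ ^ n) Filter.atTop (nhds 0) := by
    have hlim : Filter.Tendsto (fun n : ℕ => (b + lam₂) * (1 / lam₂) ^ n)
        Filter.atTop (nhds 0) := by
      have := tendsto_pow_atTop_nhds_zero_of_lt_one
        (le_of_lt (by positivity : (0:ℝ) < 1 / lam₂))
        (by rw [div_lt_one hlam0]; exact hlam)
      simpa using this.const_mul (b + lam₂)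
    apply squeeze_zero_norm _ hlim
    intro n
    obtain ⟨h1, h1', h2, h2'⟩ := hbound n
    have hun0 : 0 ≤ u n := add_nonneg (mul_nonneg hb.le h2) (mul_nonneg hlam0.le h1)
    have hun1 : u n ≤ b + lam₂ := by
      have := mul_le_mul_of_nonneg_left h2'.le hb.le
      have := mul_le_mul_of_nonneg_left h1'.le hlam0.le
      simp only [hu]; nlinarith
    rw [Real.norm_eq_abs, abs_of_nonneg (div_nonneg hun0 (pow_nonneg hlam0.le n))]
    rw [div_eq_mul_inv, ← inv_pow, ← one_div]
    exact mul_le_mul_of_nonneg_right hun1 (by positivity)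
  rw [show (fun j : ℕ => (⌊a * (p j).1 + b * (p j).2⌋ : ℝ) / lam₂ ^ j) =
      fun j => s j / lam₂ ^ j from rfl,
    hasSum_iff_tendsto_nat_of_nonneg hnonneg]
  have h : Filter.Tendsto (fun n => u 0 - u n / lam₂ ^ n) Filter.atTop (nhds (u 0 - 0)) :=
    Filter.Tendsto.sub tendsto_const_nhds htend
  rw [sub_zero] at h
  rw [← hu0]
  exact h.congr fun n => (hsum n).symm
end

section
/- Let a,b > 0, a+b > 1, λ₂ > 1 the positive eigenvalue of M = (a,b;1,0), and f(x,y) = (ax+by mod 1, x) on [0,1)². Two points with the same itinerary in the symbolic coding lie on the same line of slope 1/λ₁ (where λ₁ is the negative eigenvalue); equivalently, if ι(x_0,y_0) = ι(x_0',y_0') then b y_0 + λ₂ x_0 = b y_0' + λ₂ x_0'. -/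
/-- For f(x,y) = (ax+by mod 1, x) with a,b>0, a+b>1 and positive
eigenvalue λ₂ > 1: two points with the same itinerary satisfy
b y₀ + λ₂ x₀ = b y₀' + λ₂ x₀'. -/
theorem stmt_8 (a b lam₂ : ℝ) (ha : 0 < a) (hb : 0 < b) (hab : 1 < a + b)
    (heig : lam₂ ^ 2 = a * lam₂ + b) (hlam : 1 < lam₂)
    (x₀ y₀ x₀' y₀' : ℝ)
    (hx : 0 ≤ x₀ ∧ x₀ < 1) (hy : 0 ≤ y₀ ∧ y₀ < 1)
    (hx' : 0 ≤ x₀' ∧ x₀' < 1) (hy' : 0 ≤ y₀' ∧ y₀' < 1)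
    (f : ℝ × ℝ → ℝ × ℝ)
    (hf : ∀ p : ℝ × ℝ, f p = (Int.fract (a * p.1 + b * p.2), p.1))
    (p q : ℕ → ℝ × ℝ)
    (hp0 : p 0 = (x₀, y₀)) (hp : ∀ n, p (n + 1) = f (p n))
    (hq0 : q 0 = (x₀', y₀')) (hq : ∀ n, q (n + 1) = f (q n))
    (hsame : ∀ n, ⌊a * (p n).1 + b * (p n).2⌋ = ⌊a * (q n).1 + b * (q n).2⌋) :
    b * y₀ + lam₂ * x₀ = b * y₀' + lam₂ * x₀' := by
  have hlam0 : (0:ℝ) < lam₂ := lt_trans one_pos hlam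
  -- points stay in [0,1)²
  have hbox : ∀ (r : ℕ → ℝ × ℝ) (u v : ℝ), r 0 = (u, v) →
      (0 ≤ u ∧ u < 1) → (0 ≤ v ∧ v < 1) → (∀ n, r (n+1) = f (r n)) →
      ∀ n, (0 ≤ (r n).1 ∧ (r n).1 < 1) ∧ (0 ≤ (r n).2 ∧ (r n).2 < 1) := by
    intro r u v h0 hu hv hrec n
    induction n with
    | zero => rw [h0]; exact ⟨hu, hv⟩
    | succ k ih =>
      rw [hrec k, hf]
      exact ⟨⟨Int.fract_nonneg _, Int.fract_lt_one _⟩, ih.1⟩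
  have hpbox := hbox p x₀ y₀ hp0 hx hy hp
  have hqbox := hbox q x₀' y₀' hq0 hx' hy' hq
  -- d n := difference
  set d : ℕ → ℝ := fun n =>
    (b * (p n).2 + lam₂ * (p n).1) - (b * (q n).2 + lam₂ * (q n).1) with hd
  have hrec : ∀ n, d (n+1) = lam₂ * d n := by
    intro n
    have hp1 := hp n
    have hq1 := hq n
    rw [hf] at hp1 hq1
    have hs := hsame n
    simp only [hd, hp1, hq1, Int.fract]
    push_cast [hs]
    linear_combination ((q n).1 - (p n).1) * heig
  have hgeo : ∀ n, d n = lam₂ ^ n * d 0 := by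
    intro n
    induction n with
    | zero => simp
    | succ k ih => rw [hrec k, ih, pow_succ]; ring
  have hbound : ∀ n, |d n| ≤ b + lam₂ := by
    intro n
    have h1 := hpbox n
    have h2 := hqbox n
    simp only [hd]
    rw [abs_le]
    constructor <;> nlinarith [h1.1.1, h1.1.2, h1.2.1, h1.2.2, h2.1.1, h2.1.2, h2.2.1, h2.2.2]
  have hd0 : d 0 = 0 := by
    by_contra hne
    have habs : 0 < |d 0| := abs_pos.mpr hne
    obtain ⟨n, hn⟩ := pow_unbounded_of_one_lt ((b + lam₂) / |d 0|) hlam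
    have : |d n| = lam₂ ^ n * |d 0| := by
      rw [hgeo n, abs_mul, abs_of_pos (pow_pos hlam0 n)]
    have h2 := hbound n
    rw [this] at h2
    have : (b + lam₂) / |d 0| < lam₂ ^ n := hn
    have := (div_lt_iff₀ habs).mp this
    linarith
  simp only [hd, hp0, hq0] at hd0
  simpa using sub_eq_zero.mp hd0
end

section
/- Let a,b > 0, a+b > 1, and f(x,y) = (ax+by mod 1, x) on [0,1)² with coding s_n = ⌊a x_n + b y_n⌋. If a point (x_0,y_0) has a periodic itinerary of period n, i.e., s_{j+n} = s_j for all j ≥ 0, and (x_0,y_0) is periodic of period n under f, then x_i = (λ₁ⁿ/(λ₁ⁿ−1)) Σ_{k=0}^{n−1} α_{i+1+k}/λ₁^k and y_i = (λ₁ⁿ/(λ₁ⁿ−1)) Σ_{k=0}^{n−1} α_{i+k}/λ₁^k, where α_i = (1/b)(λ₂ⁿ/(λ₂ⁿ−1)) Σ_{j=0}^{n−1} s_{j+i}/λ₂^j. In particular, a periodic point is uniquely determined by its periodic itinerary. -/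
lemma shift_sum_aux (g : ℕ → ℝ) (lam : ℝ) (hlam : lam ≠ 0) (n i : ℕ) :
    ∑ k ∈ Finset.range n, g (i + 1 + k) / lam ^ k
      = lam * ∑ k ∈ Finset.range n, g (i + k) / lam ^ k
        + g (i + n) * (lam / lam ^ n) - g i * lam := by
  have h1 : ∑ k ∈ Finset.range (n+1), g (i + k) * (lam / lam ^ k)
      = ∑ k ∈ Finset.range n, g (i + k) * (lam / lam ^ k) + g (i + n) * (lam / lam ^ n) :=
    Finset.sum_range_succ _ n
  have h2 : ∑ k ∈ Finset.range (n+1), g (i + k) * (lam / lam ^ k)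
      = ∑ k ∈ Finset.range n, g (i + (k+1)) * (lam / lam ^ (k+1)) + g (i + 0) * (lam / lam ^ 0) :=
    Finset.sum_range_succ' _ n
  have h3 : ∀ k : ℕ, g (i + (k+1)) * (lam / lam ^ (k+1)) = g (i + 1 + k) / lam ^ k := by
    intro k
    have hk : lam ^ k ≠ 0 := pow_ne_zero _ hlam
    rw [show i + (k+1) = i + 1 + k by omega, pow_succ]
    field_simp
  have h4 : lam * ∑ k ∈ Finset.range n, g (i + k) / lam ^ k
      = ∑ k ∈ Finset.range n, g (i + k) * (lam / lam ^ k) := by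
    rw [Finset.mul_sum]
    exact Finset.sum_congr rfl (fun k _ => by ring)
  have h5 : ∑ k ∈ Finset.range n, g (i + 1 + k) / lam ^ k
      = ∑ k ∈ Finset.range n, g (i + (k+1)) * (lam / lam ^ (k+1)) :=
    Finset.sum_congr rfl (fun k _ => (h3 k).symm)
  rw [h5, h4]
  have := h2.symm.trans h1
  simp only [add_zero, pow_zero, div_one] at this
  linarith

lemma rec_per_zero_aux (a b lam₁ lam₂ : ℝ) (heig1 : lam₁ ^ 2 = a * lam₁ + b)
    (heig2 : lam₂ ^ 2 = a * lam₂ + b) (hne : lam₁ ≠ lam₂)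
    (n : ℕ) (h1 : lam₁ ^ n ≠ 1) (h2 : lam₂ ^ n ≠ 1)
    (d : ℕ → ℝ) (hrec : ∀ i, d (i + 2) = a * d (i + 1) + b * d i)
    (hper : ∀ i, d (i + n) = d i) : ∀ i, d i = 0 := by
  have hsub : lam₂ - lam₁ ≠ 0 := sub_ne_zero.mpr (Ne.symm hne)
  obtain ⟨c₂, hc₂⟩ : ∃ c : ℝ, c = (d 1 - lam₁ * d 0) / (lam₂ - lam₁) := ⟨_, rfl⟩
  obtain ⟨c₁, hc₁⟩ : ∃ c : ℝ, c = d 0 - c₂ := ⟨_, rfl⟩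
  have key : ∀ i, d i = c₁ * lam₁ ^ i + c₂ * lam₂ ^ i ∧
      d (i+1) = c₁ * lam₁ ^ (i+1) + c₂ * lam₂ ^ (i+1) := by
    intro i
    induction i with
    | zero =>
      constructor
      · rw [hc₁]; simp only [pow_zero, mul_one]; ring
      · rw [hc₁, hc₂]
        field_simp
        ring
    | succ k ih =>
      refine ⟨ih.2, ?_⟩
      have hr := hrec k
      rw [ih.1, ih.2] at hr
      rw [show k+1+1 = k+2 from rfl, hr]
      linear_combination (-(c₁ * lam₁ ^ k)) * heig1 + (-(c₂ * lam₂ ^ k)) * heig2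
  have e0 := (key 0).1
  have e1 := (key 0).2
  have en := (key n).1
  have en1 := (key n).2
  have hdn : d n = d 0 := by have := hper 0; simpa using this
  have hdn1 : d (n+1) = d 1 := by have := hper 1; rw [show 1+n = n+1 by omega] at this; exact this
  have A : c₁ * (lam₁ ^ n - 1) + c₂ * (lam₂ ^ n - 1) = 0 := by
    simp only [pow_zero, mul_one] at e0
    linear_combination hdn + e0 - en
  have B : c₁ * lam₁ * (lam₁ ^ n - 1) + c₂ * lam₂ * (lam₂ ^ n - 1) = 0 := by
    simp only [zero_add, pow_one] at e1
    linear_combination hdn1 + e1 - en1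
  have hC2 : c₂ = 0 := by
    have h : c₂ * (lam₂ - lam₁) * (lam₂ ^ n - 1) = 0 := by linear_combination B - lam₁ * A
    rcases mul_eq_zero.mp h with h' | h'
    · rcases mul_eq_zero.mp h' with h'' | h''
      · exact h''
      · exact absurd h'' hsub
    · exact absurd h' (sub_ne_zero.mpr h2)
  have hC1 : c₁ = 0 := by
    rw [hC2] at A
    simp only [zero_mul, add_zero] at A
    rcases mul_eq_zero.mp A with h' | h'
    · exact h'
    · exact absurd h' (sub_ne_zero.mpr h1)
  intro i
  rw [(key i).1, hC1, hC2]
  ring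



/-- Explicit formula for periodic points of f(x,y) = (ax+by mod 1, x)
in terms of the periodic itinerary: with α_i = (1/b)(λ₂ⁿ/(λ₂ⁿ−1)) Σ_{j<n} s_{j+i}/λ₂^j,
one has x_i = (λ₁ⁿ/(λ₁ⁿ−1)) Σ_{k<n} α_{i+1+k}/λ₁^k and
y_i = (λ₁ⁿ/(λ₁ⁿ−1)) Σ_{k<n} α_{i+k}/λ₁^k. -/
theorem stmt_9 (a b lam₁ lam₂ : ℝ) (ha : 0 < a) (hb : 0 < b) (hab : 1 < a + b)
    (heig1 : lam₁ ^ 2 = a * lam₁ + b) (heig2 : lam₂ ^ 2 = a * lam₂ + b)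
    (hlam1 : lam₁ < 0) (hlam2 : 1 < lam₂)
    (n : ℕ) (hn : 1 ≤ n) (hlam1n : lam₁ ^ n ≠ 1)
    (x₀ y₀ : ℝ) (hx : 0 ≤ x₀ ∧ x₀ < 1) (hy : 0 ≤ y₀ ∧ y₀ < 1)
    (f : ℝ × ℝ → ℝ × ℝ)
    (hf : ∀ p : ℝ × ℝ, f p = (Int.fract (a * p.1 + b * p.2), p.1))
    (p : ℕ → ℝ × ℝ) (hp0 : p 0 = (x₀, y₀)) (hp : ∀ m, p (m + 1) = f (p m))
    (s : ℕ → ℤ) (hs : ∀ m, s m = ⌊a * (p m).1 + b * (p m).2⌋)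
    (hper : ∀ j, s (j + n) = s j) (hpper : p n = p 0) :
    let α : ℕ → ℝ := fun i =>
      (1 / b) * (lam₂ ^ n / (lam₂ ^ n - 1)) * ∑ j ∈ Finset.range n, (s (j + i) : ℝ) / lam₂ ^ j
    ∀ i, (p i).1 = (lam₁ ^ n / (lam₁ ^ n - 1)) * ∑ k ∈ Finset.range n, α (i + 1 + k) / lam₁ ^ k ∧
         (p i).2 = (lam₁ ^ n / (lam₁ ^ n - 1)) * ∑ k ∈ Finset.range n, α (i + k) / lam₁ ^ k := by
  intro α
  have hb0 : b ≠ 0 := ne_of_gt hb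
  have hl10 : lam₁ ≠ 0 := ne_of_lt hlam1
  have hl2pos : (0:ℝ) < lam₂ := by linarith
  have hl20 : lam₂ ≠ 0 := ne_of_gt hl2pos
  have hl2n : lam₂ ^ n ≠ 1 := ne_of_gt (one_lt_pow₀ hlam2 (by omega))
  have hne12 : lam₁ ≠ lam₂ := ne_of_lt (by linarith)
  have hl1n1 : lam₁ ^ n - 1 ≠ 0 := sub_ne_zero.mpr hlam1n
  have hl2n1 : lam₂ ^ n - 1 ≠ 0 := sub_ne_zero.mpr hl2n
  have hl1npow : lam₁ ^ n ≠ 0 := pow_ne_zero _ hl10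
  have hl2npow : lam₂ ^ n ≠ 0 := pow_ne_zero _ hl20
  have hsum12 : lam₁ + lam₂ = a := by
    have h : (lam₁ - lam₂) * (lam₁ + lam₂ - a) = 0 := by linear_combination heig1 - heig2
    rcases mul_eq_zero.mp h with h' | h'
    · exact absurd h' (sub_ne_zero.mpr hne12)
    · linarith [h']
  have hprod12 : lam₁ * lam₂ = -b := by linear_combination lam₁ * hsum12 - heig1
  -- periodicity of α
  have hαper : ∀ i, α (i + n) = α i := by
    intro i
    simp only [α]
    congr 1
    refine Finset.sum_congr rfl (fun j _ => ?_)
    rw [show j + (i + n) = (j + i) + n by omega, hper]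
  -- α in shifted-index form
  have hα' : ∀ i, α i = (1 / b) * (lam₂ ^ n / (lam₂ ^ n - 1)) *
      ∑ j ∈ Finset.range n, ((s (i + j) : ℝ)) / lam₂ ^ j := by
    intro i
    simp only [α]
    congr 1
    exact Finset.sum_congr rfl (fun j _ => by rw [show j + i = i + j by omega])
  -- recurrence for α
  have hα_rec : ∀ i, α (i + 1) = lam₂ * α i - (lam₂ / b) * s i := by
    intro i
    have hs1 := shift_sum_aux (fun j => (s j : ℝ)) lam₂ hl20 n i
    have hsn : ((s (i + n) : ℝ)) = (s i : ℝ) := by rw [hper i]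
    rw [hsn] at hs1
    rw [hα' (i+1), hα' i, hs1]
    field_simp
    ring
  -- the orbit's first coordinate
  have hp2 : ∀ i, (p (i + 1)).2 = (p i).1 := by intro i; rw [hp, hf]
  have hx_rec : ∀ i, (p (i + 2)).1 = a * (p (i + 1)).1 + b * (p i).1 - s (i + 1) := by
    intro i
    have h1 : (p (i + 2)).1 = Int.fract (a * (p (i + 1)).1 + b * (p (i + 1)).2) := by
      rw [show i + 2 = (i + 1) + 1 from rfl, hp, hf]
    rw [h1, Int.fract, ← hs (i + 1), hp2 i]
  have hp_per : ∀ i, p (i + n) = p i := by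
    intro i
    induction i with
    | zero => simpa using hpper
    | succ k ih => rw [show k + 1 + n = (k + n) + 1 by omega, hp, ih, ← hp]
  -- the candidate solution X
  obtain ⟨X, hX⟩ : ∃ X : ℕ → ℝ, X = fun i =>
      (lam₁ ^ n / (lam₁ ^ n - 1)) * ∑ k ∈ Finset.range n, α (i + 1 + k) / lam₁ ^ k := ⟨_, rfl⟩
  have hXi : ∀ i, X i = (lam₁ ^ n / (lam₁ ^ n - 1)) *
      ∑ k ∈ Finset.range n, α (i + 1 + k) / lam₁ ^ k := fun i => by rw [hX]
  have hX_step : ∀ i, X (i + 1) = lam₁ * X i - lam₁ * α (i + 1) := by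
    intro i
    have hs1 := shift_sum_aux α lam₁ hl10 n (i + 1)
    have hsn : α (i + 1 + n) = α (i + 1) := hαper (i + 1)
    rw [hsn] at hs1
    rw [hXi (i + 1), hXi i]
    rw [show i + 1 + 1 = (i + 1) + 1 from rfl, hs1]
    field_simp
    ring
  have hX_rec : ∀ i, X (i + 2) = a * X (i + 1) + b * X i - s (i + 1) := by
    intro i
    have h1 := hX_step (i + 1)
    have h2 := hX_step i
    have h3 := hα_rec (i + 1)
    rw [show (i + 1) + 1 = i + 2 from rfl] at h1 h3
    rw [h1, h3, h2]
    rw [← hsum12, show b = -(lam₁ * lam₂) by linarith [hprod12]]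
    field_simp
    ring
  have hX_per : ∀ i, X (i + n) = X i := by
    intro i
    rw [hXi (i + n), hXi i]
    congr 1
    refine Finset.sum_congr rfl (fun k _ => ?_)
    rw [show i + n + 1 + k = (i + 1 + k) + n by omega, hαper]
  -- the difference is zero
  have hd := rec_per_zero_aux a b lam₁ lam₂ heig1 heig2 hne12 n hlam1n hl2n
    (fun i => (p i).1 - X i)
    (fun i => by rw [hx_rec i, hX_rec i]; ring)
    (fun i => by rw [hX_per i, show (p (i + n)).1 = (p i).1 by rw [hp_per]])
  have hxX : ∀ i, (p i).1 = X i := by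
    intro i
    have := hd i
    linarith
  intro i
  constructor
  · rw [hxX i, hXi i]
  · match i with
    | 0 =>
      have h1 : (p 0).2 = (p (n - 1)).1 := by
        rw [← hpper, congrArg p (show n = (n - 1) + 1 by omega), hp2]
      rw [h1, hxX (n - 1), hXi (n - 1)]
      congr 1
      refine Finset.sum_congr rfl (fun k _ => ?_)
      rw [show n - 1 + 1 + k = (0 + k) + n by omega, hαper]
    | (j + 1) =>
      rw [hp2 j, hxX j, hXi j]
end
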